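/- Under the construction hypotheses (a distributive lattice D, groups G_α, and transitive isomorphisms φ_{α,β} for β ≤ α with ψ = φ^{-1}), the operations on S = Σ_{α∈D} G_α satisfy the left distributive law: z·(x + y) = z·x + z·y for all x, y, z ∈ S. -/

import Mathlib

variable {D : Type*} [DistribLattice D] {G : D → Type*} [∀ α : D, Group (G α)]

/-- Multiplication on the disjoint union `S = Σ α, G α`:
`(α, x) · (β, y) = (αβ, φ_{α,αβ}(x) · φ_{β,αβ}(y))`. -/
def cMul (φ : ∀ α β : D, β ≤ α → (G α ≃* G β)) (s t : Σ α : D, G α) :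
    Σ α : D, G α :=
  ⟨s.1 ⊓ t.1,
    φ s.1 (s.1 ⊓ t.1) inf_le_left s.2 * φ t.1 (s.1 ⊓ t.1) inf_le_right t.2⟩

/-- Addition on the disjoint union `S = Σ α, G α`:
`(α, x) + (β, y) = (α + β, ψ_{α,α+β}(x))`, where `ψ_{β,α} = (φ_{α,β})⁻¹`
for `β ≤ α` (each `G α` carries the left-zero addition). -/
def cAdd (φ : ∀ α β : D, β ≤ α → (G α ≃* G β)) (s t : Σ α : D, G α) :
    Σ α : D, G α :=
  ⟨s.1 ⊔ t.1, (φ (s.1 ⊔ t.1) s.1 le_sup_left).symm s.2⟩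

section

variable (φ : ∀ α β : D, β ≤ α → (G α ≃* G β))

@[simp]
theorem cMul_mk {α β : D} (x : G α) (y : G β) :
    cMul φ ⟨α, x⟩ ⟨β, y⟩ = ⟨α ⊓ β, φ α (α ⊓ β) inf_le_left x * φ β (α ⊓ β) inf_le_right y⟩ :=
  rfl

@[simp]
theorem cAdd_mk {α β : D} (x : G α) (y : G β) :
    cAdd φ ⟨α, x⟩ ⟨β, y⟩ = ⟨α ⊔ β, (φ (α ⊔ β) α le_sup_left).symm x⟩ :=
  rfl

theorem sigma_mk_eq_of_map_eq (hφ_id : ∀ (α : D) (x : G α), φ α α le_rfl x = x) {α β : D}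
    (h : α = β) {x : G α} {y : G β} (hxy : φ α β h.ge x = y) :
    (⟨α, x⟩ : Σ α : D, G α) = ⟨β, y⟩ := by
  subst h
  rw [← hxy, hφ_id]

theorem map_symm_apply_of_le
    (hφ_trans : ∀ {α β γ : D} (h1 : γ ≤ β) (h2 : β ≤ α) (x : G α),
      φ β γ h1 (φ α β h2 x) = φ α γ (h1.trans h2) x)
    {α β γ : D} (hγα : γ ≤ α) (hαβ : α ≤ β) (x : G α) :
    φ β γ (hγα.trans hαβ) ((φ β α hαβ).symm x) = φ α γ hγα x := by
  rw [← hφ_trans hγα hαβ, MulEquiv.apply_symm_apply]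

end

/-- Under the construction hypotheses, the operations on
`S = Σ α, G α` satisfy the left distributive law:
`z · (x + y) = z·x + z·y` for all `x, y, z ∈ S`. -/
theorem construction_left_distrib
    (φ : ∀ α β : D, β ≤ α → (G α ≃* G β))
    (hφ_id : ∀ (α : D) (x : G α), φ α α le_rfl x = x)
    (hφ_trans : ∀ {α β γ : D} (h1 : γ ≤ β) (h2 : β ≤ α) (x : G α),
      φ β γ h1 (φ α β h2 x) = φ α γ (h1.trans h2) x)
    (x y z : Σ α : D, G α) :
    cMul φ z (cAdd φ x y) = cAdd φ (cMul φ z x) (cMul φ z y) := by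
  obtain ⟨α, x⟩ := x
  obtain ⟨β, y⟩ := y
  obtain ⟨γ, z⟩ := z
  simp only [cMul_mk, cAdd_mk]
  refine sigma_mk_eq_of_map_eq φ hφ_id (inf_sup_left γ α β) ?_
  -- After applying `φ_{γα+γβ, γα}`, both sides collapse to `φ_{γ,γα} z * φ_{α,γα} x`.
  rw [MulEquiv.eq_symm_apply, map_mul, map_mul, hφ_trans, hφ_trans, hφ_trans, hφ_trans,
    map_symm_apply_of_le φ hφ_trans]
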